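/- Let T be a signed tree with a vertex u that is matched in T (covered by every maximum matching), and let Γ be a signed graph on n vertices disjoint from T. For any 1 ≤ k ≤ n, form the k-joining graph T(u) ⊙^k Γ by adding signed edges from u to k vertices of Γ. Then η(T(u) ⊙^k Γ) = η(T) + η(Γ). -/

import Mathlib

/-!
For a signed forest `F`, deleting a pendant edge together with both its ends keeps the nullity
and lowers the matching number by one, so `η(F) = |F| - 2 μ(F)`. If `u` is matched in the tree
`T` and a kernel vector of `A(T)` were nonzero at `u`, deleting `u` would lower the nullity, and
the formula would turn a maximum matching of `T - u` into one of `T` missing `u`. Hence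
`e_u ⟂ ker A(T)`, so `A(T) z = e_u` is solvable, and since `T` is bipartite `z` can be chosen
with `z u = 0`. The adjacency matrix of the joining graph is `[A(T), e_u rᵀ; s e_uᵀ, A(Γ)]`, and
with such a `z` unipotent row and column operations clear both off-diagonal blocks.
-/

open scoped Classical

noncomputable def sadj {V : Type*} [Fintype V] [DecidableEq V]
    (G : SimpleGraph V) (σ : V → V → ℝ) : Matrix V V ℝ :=
  fun u v => if G.Adj u v then σ u v else 0

noncomputable def nullity {V : Type*} [Fintype V] [DecidableEq V]
    (A : Matrix V V ℝ) : ℕ :=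
  Module.finrank ℝ (LinearMap.ker (Matrix.mulVecLin A))

def walkSign {V : Type*} (G : SimpleGraph V) (σ : V → V → ℝ)
    {u v : V} (w : G.Walk u v) : ℝ :=
  (w.darts.map (fun d => σ d.toProd.1 d.toProd.2)).prod

def BalancedSG {V : Type*} (G : SimpleGraph V) (σ : V → V → ℝ) : Prop :=
  ∀ (u : V) (w : G.Walk u u), w.IsCycle → walkSign G σ w = 1

def IsMatchingF {V : Type*} (G : SimpleGraph V) (M : Finset (Sym2 V)) : Prop :=
  (∀ e ∈ M, e ∈ G.edgeSet) ∧
  ∀ e ∈ M, ∀ f ∈ M, e ≠ f → ∀ v : V, ¬(v ∈ e ∧ v ∈ f)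

noncomputable def matchingNumber {V : Type*} (G : SimpleGraph V) : ℕ :=
  sSup {k | ∃ M : Finset (Sym2 V), IsMatchingF G M ∧ M.card = k}

def MatchedIn {V : Type*} (G : SimpleGraph V) (u : V) : Prop :=
  ∀ M : Finset (Sym2 V), IsMatchingF G M → M.card = matchingNumber G → ∃ e ∈ M, u ∈ e

def MismatchedIn {V : Type*} (G : SimpleGraph V) (u : V) : Prop :=
  ∃ M : Finset (Sym2 V), IsMatchingF G M ∧ M.card = matchingNumber G ∧ ∀ e ∈ M, u ∉ e

/-- The k-joining graph: disjoint union of T and Γ plus edges from u to the vertices of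
the chosen set S ⊆ V(Γ). -/
def joinGraph {V₁ V₂ : Type*} (T : SimpleGraph V₁) (Γ : SimpleGraph V₂)
    (u : V₁) (S : Finset V₂) : SimpleGraph (V₁ ⊕ V₂) :=
  SimpleGraph.fromRel (fun p q =>
    match p, q with
    | Sum.inl a, Sum.inl b => T.Adj a b
    | Sum.inr a, Sum.inr b => Γ.Adj a b
    | Sum.inl a, Sum.inr b => a = u ∧ b ∈ S
    | Sum.inr _, Sum.inl _ => False)

open Matrix Module

section Nullity

variable {V W : Type*} [Fintype V] [DecidableEq V] [Fintype W] [DecidableEq W]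

lemma nullity_add_rank (A : Matrix V V ℝ) : nullity A + A.rank = Fintype.card V := by
  rw [nullity, Matrix.rank, add_comm, LinearMap.finrank_range_add_finrank_ker,
    finrank_fintype_fun_eq_card]

lemma nullity_mul_mul_of_isUnit_det {A P Q : Matrix V V ℝ} (hP : IsUnit P.det)
    (hQ : IsUnit Q.det) : nullity (Q * A * P) = nullity A := by
  have h := nullity_add_rank (Q * A * P)
  rw [rank_mul_eq_left_of_isUnit_det P _ hP, rank_mul_eq_right_of_isUnit_det Q A hQ] at h
  have := nullity_add_rank A
  omega

lemma nullity_fromBlocks_zero (A : Matrix V V ℝ) (D : Matrix W W ℝ) :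
    nullity (fromBlocks A 0 0 D) = nullity A + nullity D := by
  have hmem (x : V ⊕ W → ℝ) : x ∈ LinearMap.ker (fromBlocks A 0 0 D).mulVecLin ↔
      x ∘ Sum.inl ∈ LinearMap.ker A.mulVecLin ∧ x ∘ Sum.inr ∈ LinearMap.ker D.mulVecLin := by
    simp only [LinearMap.mem_ker, mulVecLin_apply, fromBlocks_mulVec, zero_mulVec, add_zero,
      zero_add, ← Sum.elim_zero_zero, Sum.elim_eq_iff]
  let e : LinearMap.ker (fromBlocks A 0 0 D).mulVecLin ≃ₗ[ℝ]
      LinearMap.ker A.mulVecLin × LinearMap.ker D.mulVecLin :=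
    { toFun x := (⟨x.1 ∘ Sum.inl, ((hmem x).1 x.2).1⟩, ⟨x.1 ∘ Sum.inr, ((hmem x).1 x.2).2⟩)
      invFun y := ⟨Sum.elim y.1 y.2, (hmem _).2 ⟨y.1.2, y.2.2⟩⟩
      map_add' _ _ := rfl
      map_smul' _ _ := rfl
      left_inv x := by ext (_ | _) <;> rfl
      right_inv _ := rfl }
  rw [nullity, nullity, nullity, e.finrank_eq, finrank_prod]

lemma nullity_zero : nullity (0 : Matrix V V ℝ) = Fintype.card V := by
  rw [nullity, mulVecLin_zero, LinearMap.ker_zero, finrank_top, finrank_fintype_fun_eq_card]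

lemma nullity_fromBlocks_vecMulVec_single {A : Matrix V V ℝ} (hA : A.IsSymm) {u : V}
    {z : V → ℝ} (hz : A *ᵥ z = Pi.single u 1) (hzu : z u = 0) (r s : W → ℝ)
    (D : Matrix W W ℝ) :
    nullity (fromBlocks A (vecMulVec (Pi.single u 1) r) (vecMulVec s (Pi.single u 1)) D) =
      nullity A + nullity D := by
  have hAz : A * vecMulVec z r = vecMulVec (Pi.single u 1) r := by rw [mul_vecMulVec, hz]
  have hzA : vecMulVec s z * A = vecMulVec s (Pi.single u 1) := by
    rw [vecMulVec_mul, ← hA.eq, vecMul_transpose, hz]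
  have hzz : vecMulVec s z * vecMulVec (Pi.single u 1) r = 0 := by
    simp [vecMulVec_mul_vecMulVec, dotProduct_single, hzu]
  have hQMP : fromBlocks 1 0 (-vecMulVec s z) 1 *
      fromBlocks A (vecMulVec (Pi.single u 1) r) (vecMulVec s (Pi.single u 1)) D *
      fromBlocks 1 (-vecMulVec z r) 0 1 = fromBlocks A 0 0 D := by
    simp [fromBlocks_multiply, Matrix.neg_mul, Matrix.mul_neg, hAz, hzA, hzz]
  rw [← nullity_fromBlocks_zero, ← hQMP, nullity_mul_mul_of_isUnit_det
    (by simp) (by simp)]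

end Nullity

section Symmetric
variable {V : Type*} [Fintype V] {A : Matrix V V ℝ}

lemma sum_eq_add_add_sum_subtype_ne_and_ne [DecidableEq V] {M : Type*} [AddCommMonoid M]
    {l p : V} (hlp : l ≠ p) (f : V → M) :
    ∑ v, f v = f l + f p + ∑ v : {v // v ≠ l ∧ v ≠ p}, f v := by
  rw [← Finset.sum_subtype ((Finset.univ.erase l).erase p) (by simp [and_comm]) f, add_assoc,
    Finset.add_sum_erase _ f (by simp [hlp.symm]), Finset.add_sum_erase _ f (Finset.mem_univ l)]

lemma Matrix.IsSymm.dotProduct_mulVec (hA : A.IsSymm) (x y : V → ℝ) :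
    x ⬝ᵥ A *ᵥ y = A *ᵥ x ⬝ᵥ y := by
  rw [Matrix.dotProduct_mulVec, ← mulVec_transpose, hA.eq]

lemma Matrix.IsSymm.exists_mulVec_eq (hA : A.IsSymm) {b : V → ℝ}
    (hb : ∀ x, A *ᵥ x = 0 → b ⬝ᵥ x = 0) : ∃ z, A *ᵥ z = b := by
  have hdisj : Disjoint (LinearMap.range A.mulVecLin) (LinearMap.ker A.mulVecLin) := by
    rw [Submodule.disjoint_def]
    rintro _ ⟨x, rfl⟩ hx
    rw [LinearMap.mem_ker, mulVecLin_apply, mulVecLin_apply] at hx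
    rw [mulVecLin_apply, ← dotProduct_self_eq_zero, ← hA.dotProduct_mulVec, hx, dotProduct_zero]
  have htop := Submodule.eq_top_of_disjoint _ _
    (by rw [LinearMap.finrank_range_add_finrank_ker]) hdisj
  obtain ⟨_, ⟨z, rfl⟩, k, hk, hbk⟩ := Submodule.mem_sup.mp (htop ▸ Submodule.mem_top : b ∈ _)
  rw [LinearMap.mem_ker, mulVecLin_apply] at hk
  have hk0 : k = 0 := by
    rw [← dotProduct_self_eq_zero]
    calc k ⬝ᵥ k = b ⬝ᵥ k - A *ᵥ z ⬝ᵥ k := by rw [← hbk, add_dotProduct, mulVecLin_apply]; ring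
      _ = 0 := by rw [hb k hk, ← hA.dotProduct_mulVec, hk, dotProduct_zero, sub_zero]
  exact ⟨z, by rwa [hk0, add_zero] at hbk⟩

lemma Matrix.IsSymm.nullity_submatrix_ne_lt [DecidableEq V] (hA : A.IsSymm) {u : V}
    {x : V → ℝ} (hx : A *ᵥ x = 0) (hxu : x u ≠ 0) :
    nullity (A.submatrix (Subtype.val : {v // v ≠ u} → V) Subtype.val) < nullity A := by
  set B := A.submatrix (Subtype.val : {v // v ≠ u} → V) Subtype.val
  let E : ({v // v ≠ u} → ℝ) →ₗ[ℝ] V → ℝ :=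
    LinearMap.pi fun v => if h : v = u then 0 else LinearMap.proj ⟨v, h⟩
  have hE (y) (v : {v // v ≠ u}) : E y v = y v := by simp [E, v.2]
  have hEu (y) : E y u = 0 := by simp [E]
  have hAE (y) (v : {v // v ≠ u}) : (A *ᵥ E y) v = (B *ᵥ y) v := by
    simp [mulVec, dotProduct, Fintype.sum_eq_add_sum_subtype_ne _ u, hE, hEu, B]
  have hmaps : (LinearMap.ker B.mulVecLin).map E ≤ LinearMap.ker A.mulVecLin := by
    rintro _ ⟨y, hy, rfl⟩
    rw [SetLike.mem_coe, LinearMap.mem_ker, mulVecLin_apply] at hy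
    -- `A (E y)` is supported at `u`, and it is orthogonal to `x` because `A` is symmetric
    have hsupp : A *ᵥ E y = Pi.single u ((A *ᵥ E y) u) := by
      funext v
      by_cases hv : v = u
      · subst hv; simp
      · simp [hv, hAE y ⟨v, hv⟩, hy]
    have horth := hA.dotProduct_mulVec x (E y)
    rw [hx, zero_dotProduct, hsupp, dotProduct_single] at horth
    rw [LinearMap.mem_ker, mulVecLin_apply, hsupp,
      (mul_eq_zero.mp horth).resolve_left hxu, Pi.single_zero]
  have hlt : (LinearMap.ker B.mulVecLin).map E < LinearMap.ker A.mulVecLin := by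
    refine lt_of_le_of_ne hmaps fun h => hxu ?_
    have hxmem : x ∈ (LinearMap.ker B.mulVecLin).map E := by
      rw [h, LinearMap.mem_ker, mulVecLin_apply, hx]
    obtain ⟨y, -, rfl⟩ := hxmem
    exact hEu y
  have hEinj : Function.Injective E := fun y y' h => funext fun v => by
    rw [← hE y v, ← hE y' v, h]
  rw [nullity, (Submodule.equivMapOfInjective E hEinj _).finrank_eq]
  exact Submodule.finrank_lt_finrank_of_lt hlt

lemma mulVec_apply_eq_add_add_sum_subtype [DecidableEq V] {l p : V} (hlp : l ≠ p)
    (x : V → ℝ) (v : V) : (A *ᵥ x) v =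
      A v l * x l + A v p * x p + ∑ w : {v // v ≠ l ∧ v ≠ p}, A v w * x w :=
  sum_eq_add_add_sum_subtype_ne_and_ne hlp _

lemma apply_eq_zero_of_mulVec_eq_zero_of_pendant [DecidableEq V] {l p : V} (hlp : l ≠ p)
    (hAlp : A l p ≠ 0) (hrow : ∀ w, w ≠ p → A l w = 0) {x : V → ℝ} (hx : A *ᵥ x = 0) :
    x p = 0 := by
  have h := congrFun hx l
  simp only [mulVec_apply_eq_add_add_sum_subtype hlp, hrow l hlp,
    fun w : {v // v ≠ l ∧ v ≠ p} => hrow w w.2.2, zero_mul, zero_add, Finset.sum_const_zero,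
    add_zero, Pi.zero_apply] at h
  exact (mul_eq_zero.mp h).resolve_left hAlp

lemma Matrix.IsSymm.exists_mulVec_eq_zero_extend_of_pendant [DecidableEq V] (hA : A.IsSymm)
    {l p : V} (hlp : l ≠ p) (hAlp : A l p ≠ 0) (hrow : ∀ w, w ≠ p → A l w = 0)
    {y : {v // v ≠ l ∧ v ≠ p} → ℝ}
    (hy : A.submatrix (Subtype.val : {v // v ≠ l ∧ v ≠ p} → V) Subtype.val *ᵥ y = 0) :
    ∃ x : V → ℝ, A *ᵥ x = 0 ∧ x ∘ Subtype.val = y := by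
  -- the value at `l` is forced by the row of `p`, the value at `p` by the row of `l`
  set c := -(∑ w : {v // v ≠ l ∧ v ≠ p}, A p w * y w) / A p l
  let x : V → ℝ := fun v => if h : v ≠ l ∧ v ≠ p then y ⟨v, h⟩ else if v = l then c else 0
  have hxR (w : {v // v ≠ l ∧ v ≠ p}) : x w = y w := dif_pos w.2
  have hxl : x l = c := by simp [x]
  have hxp : x p = 0 := by simp [x, hlp.symm]
  refine ⟨x, funext fun v => ?_, funext hxR⟩
  rw [mulVec_apply_eq_add_add_sum_subtype hlp, hxl, hxp, mul_zero, add_zero,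
    Finset.sum_congr rfl fun w _ => by rw [hxR w]]
  by_cases hvl : v = l
  · subst hvl
    simp [hrow _ hlp, fun w : {w // w ≠ v ∧ w ≠ p} => hrow w w.2.2]
  by_cases hvp : v = p
  · subst hvp
    have hApl : A v l ≠ 0 := by rwa [hA.apply]
    simp only [c, Pi.zero_apply]
    field_simp
    ring
  · rw [hA.apply, hrow v hvp, zero_mul, zero_add]
    exact congrFun hy ⟨v, hvl, hvp⟩

lemma Matrix.IsSymm.nullity_submatrix_of_pendant [DecidableEq V] (hA : A.IsSymm) {l p : V}
    (hlp : l ≠ p) (hAlp : A l p ≠ 0) (hrow : ∀ w, w ≠ p → A l w = 0) :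
    nullity (A.submatrix (Subtype.val : {v // v ≠ l ∧ v ≠ p} → V) Subtype.val) = nullity A := by
  set B := A.submatrix (Subtype.val : {v // v ≠ l ∧ v ≠ p} → V) Subtype.val
  have hxp {x : V → ℝ} := apply_eq_zero_of_mulVec_eq_zero_of_pendant hlp hAlp hrow (x := x)
  have hrestrict (x : V → ℝ) (hx : x ∈ LinearMap.ker A.mulVecLin) :
      LinearMap.funLeft ℝ ℝ Subtype.val x ∈ LinearMap.ker B.mulVecLin := by
    rw [LinearMap.mem_ker, mulVecLin_apply] at hx ⊢
    funext v
    have h := congrFun hx v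
    rwa [mulVec_apply_eq_add_add_sum_subtype hlp, hA.apply, hrow v v.2.2, hxp hx, zero_mul,
      mul_zero, add_zero, zero_add] at h
  let ρ := (LinearMap.funLeft ℝ ℝ Subtype.val).restrict hrestrict
  have hinj : Function.Injective ρ := by
    rw [injective_iff_map_eq_zero]
    rintro ⟨x, hx⟩ hρx
    rw [LinearMap.mem_ker, mulVecLin_apply] at hx
    have hxR (w : {v // v ≠ l ∧ v ≠ p}) : x w = 0 := congrFun (congrArg Subtype.val hρx) w
    have hxl : x l = 0 := by
      have h := congrFun hx p
      simp only [mulVec_apply_eq_add_add_sum_subtype hlp, hxp hx, hxR, mul_zero, add_zero,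
        Finset.sum_const_zero, Pi.zero_apply] at h
      exact (mul_eq_zero.mp h).resolve_left (by rwa [hA.apply])
    refine Subtype.ext (funext fun v => show x v = 0 from ?_)
    by_cases hvl : v = l
    · rw [hvl, hxl]
    by_cases hvp : v = p
    · rw [hvp, hxp hx]
    · exact hxR ⟨v, hvl, hvp⟩
  have hsurj : Function.Surjective ρ := by
    rintro ⟨y, hy⟩
    rw [LinearMap.mem_ker, mulVecLin_apply] at hy
    obtain ⟨x, hx, rfl⟩ := hA.exists_mulVec_eq_zero_extend_of_pendant hlp hAlp hrow hy
    exact ⟨⟨x, hx⟩, rfl⟩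
  exact (LinearEquiv.ofBijective ρ ⟨hinj, hsurj⟩).finrank_eq.symm

end Symmetric

section Matching
variable {V : Type*} {G : SimpleGraph V} {M : Finset (Sym2 V)}

lemma IsMatchingF.mono {N : Finset (Sym2 V)} (hM : IsMatchingF G M) (hNM : N ⊆ M) :
    IsMatchingF G N :=
  ⟨fun e he => hM.1 e (hNM he), fun e he f hf => hM.2 e (hNM he) f (hNM hf)⟩

lemma IsMatchingF.card_filter_mem_le_one (hM : IsMatchingF G M) (v : V) :
    (M.filter (v ∈ ·)).card ≤ 1 := by
  refine Finset.card_le_one.mpr fun e he f hf => by_contra fun hef => ?_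
  rw [Finset.mem_filter] at he hf
  exact hM.2 e he.1 f hf.1 hef v ⟨he.2, hf.2⟩

lemma IsMatchingF.insert (hM : IsMatchingF G M) {e : Sym2 V} (he : e ∈ G.edgeSet)
    (hdisj : ∀ f ∈ M, ∀ v ∈ e, v ∉ f) : IsMatchingF G (insert e M) := by
  refine ⟨fun f hf => ?_, fun f hf f' hf' hff' v hv => ?_⟩
  · rcases Finset.mem_insert.mp hf with rfl | hf
    exacts [he, hM.1 f hf]
  · rcases Finset.mem_insert.mp hf with rfl | hfM <;>
      rcases Finset.mem_insert.mp hf' with rfl | hf'M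
    · exact hff' rfl
    · exact hdisj f' hf'M v hv.1 hv.2
    · exact hdisj f hfM v hv.2 hv.1
    · exact hM.2 f hfM f' hf'M hff' v hv

section Induce
variable {s : Set V}

lemma isMatchingF_induce_iff {N : Finset (Sym2 s)} :
    IsMatchingF (G.induce s) N ↔ IsMatchingF G (N.image (Sym2.map Subtype.val)) := by
  have hinj := Sym2.map.injective (Subtype.val_injective (p := (· ∈ s)))
  simp only [IsMatchingF, Finset.forall_mem_image, hinj.ne_iff]
  refine and_congr (forall₂_congr fun e _ => ?_) (forall₂_congr fun e _ => forall₃_congr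
    fun f _ _ => ⟨fun h v hv => ?_, fun h v hv => h v (by simpa using hv)⟩)
  · induction e using Sym2.ind with
    | _ a b => simp
  · obtain ⟨w, hw, rfl⟩ := Sym2.mem_map.mp hv.1
    exact h w ⟨hw, by simpa using hv.2⟩

lemma mem_of_mem_image_val {N : Finset (Sym2 s)} {e : Sym2 V}
    (he : e ∈ N.image (Sym2.map Subtype.val)) {v : V} (hv : v ∈ e) : v ∈ s := by
  obtain ⟨e, -, rfl⟩ := Finset.mem_image.mp he
  obtain ⟨w, -, rfl⟩ := Sym2.mem_map.mp hv
  exact w.2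

lemma card_image_val (N : Finset (Sym2 s)) :
    (N.image (Sym2.map Subtype.val)).card = N.card :=
  N.card_image_of_injective (Sym2.map.injective Subtype.val_injective)

lemma IsMatchingF.exists_induce (hM : IsMatchingF G M)
    (hs : ∀ e ∈ M, ∀ v ∈ e, v ∈ s) :
    ∃ N : Finset (Sym2 s), IsMatchingF (G.induce s) N ∧ N.card = M.card := by
  have hinj := Sym2.map.injective (Subtype.val_injective (p := (· ∈ s)))
  have hrange : ∀ e ∈ M, e ∈ Set.range (Sym2.map (Subtype.val : s → V)) := by
    intro e he
    induction e using Sym2.ind with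
    | _ a b =>
      exact ⟨s(⟨a, hs _ he a (Sym2.mem_mk_left a b)⟩, ⟨b, hs _ he b (Sym2.mem_mk_right a b)⟩),
        rfl⟩
  have himage : (M.preimage _ hinj.injOn).image (Sym2.map Subtype.val) = M := by
    rw [Finset.image_preimage, Finset.filter_true_of_mem hrange]
  refine ⟨M.preimage _ hinj.injOn, isMatchingF_induce_iff.mpr (by rwa [himage]), ?_⟩
  rw [← card_image_val, himage]

end Induce

variable [Fintype V]

lemma bddAbove_card_isMatchingF (G : SimpleGraph V) :
    BddAbove {k | ∃ M : Finset (Sym2 V), IsMatchingF G M ∧ M.card = k} := by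
  refine ⟨Fintype.card (Sym2 V), ?_⟩
  rintro _ ⟨M, -, rfl⟩
  exact M.card_le_univ

lemma exists_isMatchingF_card_eq_matchingNumber (G : SimpleGraph V) :
    ∃ M : Finset (Sym2 V), IsMatchingF G M ∧ M.card = matchingNumber G :=
  Nat.sSup_mem ⟨0, by exact ⟨∅, by simp [IsMatchingF], rfl⟩⟩ (bddAbove_card_isMatchingF G)

lemma IsMatchingF.card_le_matchingNumber (hM : IsMatchingF G M) :
    M.card ≤ matchingNumber G :=
  le_csSup (bddAbove_card_isMatchingF G) ⟨M, hM, rfl⟩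

lemma matchingNumber_eq_zero_of_forall_not_adj (G : SimpleGraph V) (h : ∀ a b, ¬G.Adj a b) :
    matchingNumber G = 0 := by
  obtain ⟨M, hM, hcard⟩ := exists_isMatchingF_card_eq_matchingNumber G
  rw [← hcard, Finset.card_eq_zero, Finset.eq_empty_iff_forall_notMem]
  intro e he
  induction e using Sym2.ind with
  | _ a b => exact h a b (hM.1 _ he)

lemma matchingNumber_eq_induce_add_one_of_pendant {l p : V} (hlp : G.Adj l p)
    (hleaf : ∀ w, G.Adj l w → w = p) :
    matchingNumber G = matchingNumber (G.induce {v | v ≠ l ∧ v ≠ p}) + 1 := by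
  set s : Set V := {v | v ≠ l ∧ v ≠ p}
  apply le_antisymm
  · obtain ⟨M, hM, hcard⟩ := exists_isMatchingF_card_eq_matchingNumber G
    have hout : M.filter (fun e => ¬∀ v ∈ e, v ∈ s) ⊆ M.filter (p ∈ ·) := by
      intro e he
      rw [Finset.mem_filter] at he ⊢
      refine ⟨he.1, ?_⟩
      have hadj := hM.1 e he.1
      induction e using Sym2.ind with
      | _ a b =>
        simp only [Sym2.mem_iff, forall_eq_or_imp, forall_eq, s, Set.mem_ofPred_eq] at he ⊢
        rw [SimpleGraph.mem_edgeSet] at hadj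
        by_cases ha : a = l
        · subst ha; exact Or.inr (hleaf b hadj).symm
        by_cases hb : b = l
        · subst hb; exact Or.inl (hleaf a hadj.symm).symm
        tauto
    obtain ⟨N, hN, hNcard⟩ := (hM.mono (Finset.filter_subset _ M)).exists_induce
      (s := s) fun e he => (Finset.mem_filter.mp he).2
    have := M.card_filter_add_card_filter_not (fun e => ∀ v ∈ e, v ∈ s)
    have := (Finset.card_le_card hout).trans (hM.card_filter_mem_le_one p)
    have := hN.card_le_matchingNumber
    omega
  · obtain ⟨N, hN, hcard⟩ := exists_isMatchingF_card_eq_matchingNumber (G.induce s)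
    have hM := isMatchingF_induce_iff.mp hN
    have hl : s(l, p) ∉ N.image (Sym2.map Subtype.val) := fun h =>
      (mem_of_mem_image_val h (Sym2.mem_mk_left l p)).1 rfl
    have hins := hM.insert hlp fun f hf v hv hvf => by
      have := mem_of_mem_image_val hf hvf
      rcases Sym2.mem_iff.mp hv with rfl | rfl
      exacts [this.1 rfl, this.2 rfl]
    have := hins.card_le_matchingNumber
    rw [Finset.card_insert_of_notMem hl, card_image_val] at this
    omega

end Matching

section SignedGraph
variable {V : Type*} [Fintype V] [DecidableEq V]

lemma sadj_isSymm (G : SimpleGraph V) {σ : V → V → ℝ} (hσ : ∀ a b, σ a b = σ b a) :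
    (sadj G σ).IsSymm := by
  ext a b
  simp only [transpose_apply, sadj, G.adj_comm b a, hσ b a]

lemma sadj_induce (G : SimpleGraph V) (σ : V → V → ℝ) (p : V → Prop) [DecidablePred p] :
    sadj (V := {v // p v}) (G.induce {v | p v}) (fun a b => σ a b) =
      (sadj G σ).submatrix Subtype.val Subtype.val :=
  rfl

lemma mulVec_sadj_apply_congr (G : SimpleGraph V) (σ : V → V → ℝ) {x y : V → ℝ} {v : V}
    (h : ∀ w, G.Adj v w → x w = y w) : (sadj G σ *ᵥ x) v = (sadj G σ *ᵥ y) v := by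
  refine Finset.sum_congr rfl fun w _ => ?_
  by_cases hvw : G.Adj v w
  · simp [sadj, hvw, h w hvw]
  · simp [sadj, hvw]

lemma exists_mulVec_sadj_eq_single_and_apply_eq_zero {G : SimpleGraph V} (hG : G.Colorable 2)
    (σ : V → V → ℝ) {u : V} {z₀ : V → ℝ} (hz₀ : sadj G σ *ᵥ z₀ = Pi.single u 1) :
    ∃ z, sadj G σ *ᵥ z = Pi.single u 1 ∧ z u = 0 := by
  obtain ⟨c⟩ := hG
  -- a row of `sadj G σ` only sees the colour class opposite to its own
  set z : V → ℝ := fun v => if c v = c u then 0 else z₀ v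
  refine ⟨z, funext fun v => ?_, if_pos rfl⟩
  by_cases hv : c v = c u
  · rw [mulVec_sadj_apply_congr G σ (y := z₀) fun w hw => if_neg (hv ▸ (c.valid hw).symm),
      hz₀]
  · have hz : ∀ w, G.Adj v w → z w = (0 : V → ℝ) w := fun w hw => if_pos <| by
      have := c.valid hw
      omega
    rw [mulVec_sadj_apply_congr G σ hz, mulVec_zero,
      Pi.single_eq_of_ne (fun h : v = u => hv (h ▸ rfl)), Pi.zero_apply]

end SignedGraph

section Forest
variable {V : Type*} [Fintype V] {G : SimpleGraph V}

lemma SimpleGraph.IsAcyclic.exists_pendant (hG : G.IsAcyclic) {a b : V}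
    (hab : G.Adj a b) : ∃ l p, G.Adj l p ∧ ∀ w, G.Adj l w → w = p := by
  set P := {n | ∃ (x y : V) (q : G.Walk x y), q.IsPath ∧ q.length = n}
  have hbdd : BddAbove P := by
    refine ⟨Fintype.card V, ?_⟩
    rintro _ ⟨x, y, q, hq, rfl⟩
    exact hq.length_lt.le
  have h1 : 1 ∈ P := ⟨a, b, hab.toWalk, by simp [hab.ne], rfl⟩
  obtain ⟨x, y, q, hq, hlen⟩ := Nat.sSup_mem ⟨1, h1⟩ hbdd
  -- the first vertex of a longest path is a pendant vertex
  have hpos : ¬q.Nil := by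
    rw [SimpleGraph.Walk.not_nil_iff_lt_length, hlen]
    exact le_csSup hbdd h1
  refine ⟨x, q.snd, q.adj_snd hpos, fun w hw => ?_⟩
  by_cases hws : w ∈ q.support
  · exact hG.eq_snd_of_adj_start hq hw hws
  · have := le_csSup hbdd ⟨w, y, q.cons hw.symm, hq.cons hws, rfl⟩
    rw [← hlen, SimpleGraph.Walk.length_cons] at this
    omega

variable [DecidableEq V]

theorem SimpleGraph.IsAcyclic.nullity_sadj_add_two_mul_matchingNumber (hG : G.IsAcyclic)
    {σ : V → V → ℝ} (hσ : ∀ a b, σ a b = σ b a) (hσ0 : ∀ a b, G.Adj a b → σ a b ≠ 0) :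
    nullity (sadj G σ) + 2 * matchingNumber G = Fintype.card V := by
  induction hn : Fintype.card V using Nat.strong_induction_on generalizing V with
  | _ n ih =>
  by_cases hedge : ∃ a b, G.Adj a b
  · obtain ⟨a, b, hab⟩ := hedge
    obtain ⟨l, p, hlp, hleaf⟩ := hG.exists_pendant hab
    have hcard := sum_eq_add_add_sum_subtype_ne_and_ne hlp.ne (fun _ => (1 : ℕ))
    simp only [Finset.sum_const, Finset.card_univ, smul_eq_mul, mul_one] at hcard
    have hind := ih _ (by omega) (V := {v // v ≠ l ∧ v ≠ p})
      (G := G.induce {v | v ≠ l ∧ v ≠ p}) (hG.induce _) (σ := fun a b => σ a b)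
      (fun a b => hσ a b) (fun a b h => hσ0 a b h) rfl
    have hnull := (sadj_isSymm G hσ).nullity_submatrix_of_pendant hlp.ne
      (by simpa [sadj, hlp] using hσ0 l p hlp) fun w hw => if_neg fun h => hw (hleaf w h)
    rw [sadj_induce, hnull] at hind
    rw [matchingNumber_eq_induce_add_one_of_pendant hlp hleaf]
    omega
  · simp only [not_exists] at hedge
    have hzero : sadj G σ = 0 := by ext a b; simp [sadj, hedge a b]
    rw [hzero, nullity_zero, matchingNumber_eq_zero_of_forall_not_adj G hedge, hn, mul_zero,
      add_zero]

lemma MatchedIn.apply_eq_zero_of_mulVec_sadj_eq_zero (hG : G.IsAcyclic) {σ : V → V → ℝ}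
    (hσ : ∀ a b, σ a b = σ b a) (hσ0 : ∀ a b, G.Adj a b → σ a b ≠ 0) {u : V}
    (hu : MatchedIn G u) {x : V → ℝ} (hx : sadj G σ *ᵥ x = 0) : x u = 0 := by
  by_contra hxu
  -- deleting `u` lowers the nullity, so by the nullity formula a maximum matching of `G - u`
  -- is a maximum matching of `G` that misses `u`
  have hlt := (sadj_isSymm G hσ).nullity_submatrix_ne_lt hx hxu
  have hformula := hG.nullity_sadj_add_two_mul_matchingNumber hσ hσ0
  have hformula' := (hG.induce {v | v ≠ u}).nullity_sadj_add_two_mul_matchingNumber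
    (V := {v // v ≠ u}) (σ := fun a b => σ a b) (fun a b => hσ a b) (fun a b h => hσ0 a b h)
  have hcard := Fintype.sum_eq_add_sum_subtype_ne (fun _ => (1 : ℕ)) u
  simp only [Finset.sum_const, Finset.card_univ, smul_eq_mul, mul_one] at hcard
  rw [sadj_induce] at hformula'
  obtain ⟨N, hN, hNcard⟩ := exists_isMatchingF_card_eq_matchingNumber (G.induce {v | v ≠ u})
  have hM := isMatchingF_induce_iff.mp hN
  have := hM.card_le_matchingNumber
  rw [card_image_val] at this
  obtain ⟨e, he, hue⟩ := hu _ hM (by rw [card_image_val]; omega)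
  exact mem_of_mem_image_val he hue rfl

end Forest

section JoinGraph
variable {V₁ V₂ : Type*} {T : SimpleGraph V₁} {Γ : SimpleGraph V₂} {u : V₁} {S : Finset V₂}

@[simp] lemma joinGraph_adj_inl_inl {a b : V₁} :
    (joinGraph T Γ u S).Adj (.inl a) (.inl b) ↔ T.Adj a b := by
  simpa [joinGraph, T.adj_comm b a] using fun h => h.ne

@[simp] lemma joinGraph_adj_inr_inr {c d : V₂} :
    (joinGraph T Γ u S).Adj (.inr c) (.inr d) ↔ Γ.Adj c d := by
  simpa [joinGraph, Γ.adj_comm d c] using fun h => h.ne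

@[simp] lemma joinGraph_adj_inl_inr {a : V₁} {c : V₂} :
    (joinGraph T Γ u S).Adj (.inl a) (.inr c) ↔ a = u ∧ c ∈ S := by
  simp [joinGraph]

@[simp] lemma joinGraph_adj_inr_inl {a : V₁} {c : V₂} :
    (joinGraph T Γ u S).Adj (.inr c) (.inl a) ↔ a = u ∧ c ∈ S := by
  simp [joinGraph]

lemma sadj_joinGraph [Fintype V₁] [DecidableEq V₁] [Fintype V₂] [DecidableEq V₂]
    {σ₁ : V₁ → V₁ → ℝ} {σ₂ : V₂ → V₂ → ℝ} {τ : V₁ ⊕ V₂ → V₁ ⊕ V₂ → ℝ}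
    (hτ₁ : ∀ a b, τ (.inl a) (.inl b) = σ₁ a b) (hτ₂ : ∀ a b, τ (.inr a) (.inr b) = σ₂ a b) :
    sadj (joinGraph T Γ u S) τ = fromBlocks (sadj T σ₁)
      (vecMulVec (Pi.single u 1) fun c => if c ∈ S then τ (.inl u) (.inr c) else 0)
      (vecMulVec (fun c => if c ∈ S then τ (.inr c) (.inl u) else 0) (Pi.single u 1))
      (sadj Γ σ₂) := by
  ext (a | c) (b | d)
  · simp [sadj, hτ₁]
  · by_cases h : a = u <;> simp [sadj, vecMulVec_apply, h]
  · by_cases h : b = u <;> simp [sadj, vecMulVec_apply, h]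
  · simp [sadj, hτ₂]

end JoinGraph

theorem stmt14_general {V₁ V₂ : Type*} [Fintype V₁] [DecidableEq V₁] [Fintype V₂] [DecidableEq V₂]
    (T : SimpleGraph V₁) (σ₁ : V₁ → V₁ → ℝ) (hT : T.IsTree)
    (hsym₁ : ∀ a b, σ₁ a b = σ₁ b a)
    (hpm₁ : ∀ a b, T.Adj a b → σ₁ a b = 1 ∨ σ₁ a b = -1)
    (Γ : SimpleGraph V₂) (σ₂ : V₂ → V₂ → ℝ)
    (u : V₁) (hu : MatchedIn T u)
    (S : Finset V₂)
    (τ : (V₁ ⊕ V₂) → (V₁ ⊕ V₂) → ℝ)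
    (hτ₁ : ∀ a b : V₁, τ (Sum.inl a) (Sum.inl b) = σ₁ a b)
    (hτ₂ : ∀ a b : V₂, τ (Sum.inr a) (Sum.inr b) = σ₂ a b) :
    nullity (sadj (joinGraph T Γ u S) τ) =
      nullity (sadj T σ₁) + nullity (sadj Γ σ₂) := by
  have hσ₁0 : ∀ a b, T.Adj a b → σ₁ a b ≠ 0 := fun a b h => by
    rcases hpm₁ a b h with h | h <;> norm_num [h]
  have hA := sadj_isSymm T hsym₁
  obtain ⟨z₀, hz₀⟩ := hA.exists_mulVec_eq (b := Pi.single u 1) fun x hx => by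
    rw [single_dotProduct, one_mul]
    exact hu.apply_eq_zero_of_mulVec_sadj_eq_zero hT.isAcyclic hsym₁ hσ₁0 hx
  obtain ⟨z, hz, hzu⟩ :=
    exists_mulVec_sadj_eq_single_and_apply_eq_zero hT.colorable_two σ₁ hz₀
  rw [sadj_joinGraph hτ₁ hτ₂, nullity_fromBlocks_vecMulVec_single hA hz hzu]

/-- if u is matched in the signed tree T, then for any 1 ≤ k ≤ n,
η(T(u) ⊙ᵏ Γ) = η(T) + η(Γ). -/
theorem stmt14 {V₁ V₂ : Type*} [Fintype V₁] [DecidableEq V₁] [Fintype V₂] [DecidableEq V₂]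
    (T : SimpleGraph V₁) (σ₁ : V₁ → V₁ → ℝ) (hT : T.IsTree)
    (hsym₁ : ∀ a b, σ₁ a b = σ₁ b a)
    (hpm₁ : ∀ a b, T.Adj a b → σ₁ a b = 1 ∨ σ₁ a b = -1)
    (Γ : SimpleGraph V₂) (σ₂ : V₂ → V₂ → ℝ)
    (hsym₂ : ∀ a b, σ₂ a b = σ₂ b a)
    (hpm₂ : ∀ a b, Γ.Adj a b → σ₂ a b = 1 ∨ σ₂ a b = -1)
    (u : V₁) (hu : MatchedIn T u)
    (k : ℕ) (hk1 : 1 ≤ k) (hk2 : k ≤ Fintype.card V₂)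
    (S : Finset V₂) (hS : S.card = k)
    (τ : (V₁ ⊕ V₂) → (V₁ ⊕ V₂) → ℝ)
    (hτsym : ∀ p q, τ p q = τ q p)
    (hτpm : ∀ p q, (joinGraph T Γ u S).Adj p q → τ p q = 1 ∨ τ p q = -1)
    (hτ₁ : ∀ a b : V₁, τ (Sum.inl a) (Sum.inl b) = σ₁ a b)
    (hτ₂ : ∀ a b : V₂, τ (Sum.inr a) (Sum.inr b) = σ₂ a b) :
    nullity (sadj (joinGraph T Γ u S) τ) =
      nullity (sadj T σ₁) + nullity (sadj Γ σ₂) :=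
  stmt14_general T σ₁ hT hsym₁ hpm₁ Γ σ₂ u hu S τ hτ₁ hτ₂
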